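/- arXiv:2212.13305 — 2 statements merged into one kernel-verified Lean document; each statement's English description precedes it below -/
import Mathlib

section
/- For every nonnegative integer n and every complex number a not in {0, -1, -2, ...} with a + n + 1 not in {0, -1, -2, ...}, the terminating hypergeometric sum ∑_{k=0}^n [(a)_k (a)_k (-n)_k (1+a/2)_k] / [(1)_k (a/2)_k (n+a+1)_k] · (-1)^k / k! equals (a+1)_n / n!. -/
/-! Creative telescoping. Writing `T n k` for the summand and `S n = ∑ₖ T n k`, Zeilberger's
algorithm produces a certificate `H n k` with
`T (n+1) k - (a+n+1)/(n+1) · T n k = H n (k+1) - H n k`.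
Since `(-n)_k` kills `T n k` for `k > n`, and `H n` vanishes at `k = 0` and at `k = n + 2`,
summing over `k` gives `S (n+1) = (a+n+1)/(n+1) · S n`; with `S 0 = 1` this is `(a+1)_n / n!`. -/

open Real Finset

noncomputable def poch (a : ℂ) : ℕ → ℂ
  | 0 => 1
  | (n+1) => poch a n * (a + n)

open Nat

lemma poch_zero (a : ℂ) : poch a 0 = 1 := rfl

lemma poch_succ (a : ℂ) (n : ℕ) : poch a (n + 1) = poch a n * (a + n) := rfl

lemma poch_succ' (a : ℂ) (n : ℕ) : poch a (n + 1) = a * poch (a + 1) n := by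
  induction n with
  | zero => simp [poch]
  | succ m ih =>
    rw [poch_succ, ih, poch_succ]
    push_cast
    ring

lemma poch_add_one (b : ℂ) (hb : b ≠ 0) (n : ℕ) : poch (b + 1) n = poch b n * (b + n) / b := by
  rw [← poch_succ, poch_succ', mul_div_cancel_left₀ _ hb]

lemma poch_one (n : ℕ) : poch 1 n = n ! := by
  induction n with
  | zero => simp [poch_zero]
  | succ m ih =>
    rw [poch_succ, ih, Nat.factorial_succ]
    push_cast
    ring

lemma poch_ne_zero {a : ℂ} (h : ∀ i : ℕ, a + i ≠ 0) (n : ℕ) : poch a n ≠ 0 := by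
  induction n with
  | zero => exact one_ne_zero
  | succ m ih => exact mul_ne_zero ih (h m)

lemma poch_neg_natCast (n : ℕ) : poch (-n) (n + 1) = 0 := by
  simp [poch_succ]

lemma sum_range_succ_eq_mul_of_telescoping {R : Type*} [CommRing R] {T : ℕ → ℕ → R}
    {H : ℕ → R} {c : R} {n : ℕ} (hT : ∀ k, T (n + 1) k = c * T n k + (H (k + 1) - H k))
    (hTn : T n (n + 1) = 0) (hH0 : H 0 = 0) (hH : H (n + 2) = 0) :
    ∑ k ∈ range (n + 2), T (n + 1) k = c * ∑ k ∈ range (n + 1), T n k := by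
  rw [sum_congr rfl fun k _ => hT k, sum_add_distrib, sum_range_sub, ← mul_sum,
    sum_range_succ _ (n + 1), hTn, hH, hH0]
  ring

noncomputable def term (a : ℂ) (n k : ℕ) : ℂ :=
  (poch a k * poch a k * poch (-(n : ℂ)) k * poch (1 + a/2) k) /
    (poch 1 k * poch (a/2) k * poch ((n : ℂ) + a + 1) k) * (-1) ^ k / (Nat.factorial k : ℂ)

noncomputable def cert (a : ℂ) (n k : ℕ) : ℂ :=
  -(a + n + 1) * k ^ 2 * poch a k ^ 2 * poch (-n - 1) k * (-1) ^ k /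
    ((n + 1) ^ 2 * a * k ! ^ 2 * poch (n + a + 1) k)

lemma term_succ_eq_mul_add_cert_sub {a : ℂ} (ha : ∀ i : ℕ, a + i ≠ 0) (n k : ℕ) :
    term a (n + 1) k = (a + n + 1) / (n + 1) * term a n k + (cert a n (k + 1) - cert a n k) := by
  have ha0 : a ≠ 0 := by simpa using ha 0
  have hb : -(n : ℂ) - 1 ≠ 0 := by rw [← neg_add']; exact neg_ne_zero.mpr n.cast_add_one_ne_zero
  have hna0 : (n : ℂ) + a + 1 ≠ 0 := by convert ha (n + 1) using 1; push_cast; ring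
  have hnak : (n : ℂ) + a + 1 + k ≠ 0 := by convert ha (n + 1 + k) using 1; push_cast; ring
  have hhalf : poch (a / 2) k ≠ 0 :=
    poch_ne_zero (fun i h => ha (2 * i) (by push_cast; linear_combination 2 * h)) k
  have shift_half : poch (1 + a / 2) k = poch (a / 2) k * (a / 2 + k) / (a / 2) := by
    rw [add_comm, poch_add_one _ (div_ne_zero ha0 two_ne_zero)]
  have shift_neg : poch (-(n : ℂ)) k = poch (-n - 1) k * (-n - 1 + k) / (-n - 1) := by
    rw [← poch_add_one _ hb, sub_add_cancel]
  have cast_succ_neg : poch (-((n + 1 : ℕ) : ℂ)) k = poch (-n - 1) k := by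
    push_cast; ring_nf
  have shift_den : poch (((n + 1 : ℕ) : ℂ) + a + 1) k =
      poch (n + a + 1) k * (n + a + 1 + k) / (n + a + 1) := by
    rw [← poch_add_one _ hna0]; push_cast; ring_nf
  -- Only `(a)_k, (a/2)_k, (-n-1)_k, (n+a+1)_k` remain, so what is left is a rational identity.
  unfold term cert
  rw [shift_half, shift_neg, cast_succ_neg, shift_den, poch_one, poch_succ, poch_succ, poch_succ,
    Nat.factorial_succ, pow_succ]
  push_cast
  field_simp
  ring

lemma term_self_add_one (a : ℂ) (n : ℕ) : term a n (n + 1) = 0 := by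
  simp [term, poch_neg_natCast]

lemma cert_zero (a : ℂ) (n : ℕ) : cert a n 0 = 0 := by
  simp [cert]

lemma cert_self_add_two (a : ℂ) (n : ℕ) : cert a n (n + 2) = 0 := by
  have h : poch (-n - 1) (n + 2) = 0 := by
    convert poch_neg_natCast (n + 1) using 2; push_cast; ring
  simp only [cert, h, mul_zero, zero_mul, zero_div]

lemma sum_term {a : ℂ} (ha : ∀ i : ℕ, a + i ≠ 0) (n : ℕ) :
    ∑ k ∈ range (n + 1), term a n k = poch (a + 1) n / n ! := by
  induction n with
  | zero => simp [term, poch_zero]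
  | succ n ih =>
    rw [sum_range_succ_eq_mul_of_telescoping (term_succ_eq_mul_add_cert_sub ha n)
      (term_self_add_one a n) (cert_zero a n) (cert_self_add_two a n), ih, poch_succ,
      Nat.factorial_succ]
    push_cast
    field_simp
    ring

theorem stmt3_general (n : ℕ) (a : ℂ) (ha : ∀ m : ℕ, a ≠ -(m : ℂ)) :
    ∑ k ∈ Finset.range (n+1),
      (poch a k * poch a k * poch (-(n : ℂ)) k * poch (1 + a/2) k) /
        (poch 1 k * poch (a/2) k * poch ((n : ℂ) + a + 1) k) * (-1) ^ k / (Nat.factorial k : ℂ)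
    = poch (a + 1) n / (Nat.factorial n : ℂ) :=
  sum_term (fun i h => ha i (eq_neg_of_add_eq_zero_left h)) n

theorem stmt3 (n : ℕ) (a : ℂ) (ha : ∀ m : ℕ, a ≠ -(m : ℂ))
    (han : ∀ m : ℕ, a + n + 1 ≠ -(m : ℂ)) :
    ∑ k ∈ Finset.range (n+1),
      (poch a k * poch a k * poch (-(n : ℂ)) k * poch (1 + a/2) k) /
        (poch 1 k * poch (a/2) k * poch ((n : ℂ) + a + 1) k) * (-1) ^ k / (Nat.factorial k : ℂ)
    = poch (a + 1) n / (Nat.factorial n : ℂ) :=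
  stmt3_general n a ha
end

section
/- For every nonnegative integer n and suitably bounded complex a (with a not in {0,-1,-2,...} and a+n+1 not a nonpositive integer), the sum ∑_{k=0}^n [(a)_k (a-1)_k (-n)_k (1+a/2)_k] / [(2)_k (a/2)_k (n+a+1)_k] · (-1)^k / k! equals (a+1)_n / (n+1)!. -/
/-!
Up to the factor `(a + 1)_n / a`, the `k`-th summand is
`F(n, k) = C(n, k) (a + 2k) (a)_k (a - 1)_k / ((k + 1)! (a + 1)_{n+k})`.
Zeilberger's algorithm yields a certificate `G` with
`(n + 2) F(n + 1, k) - F(n, k) = G(n, k + 1) - G(n, k)`, and `G(n, ·)` vanishes at `k = 0` and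
`k = n + 2`. Summing over `k` gives `(n + 2) S(n + 1) = S(n)` for `S(n) = ∑ₖ F(n, k)`; since
`S(0) = a`, we get `S(n) = a / (n + 1)!`.
-/

open Real Finset

open Nat Polynomial

lemma poch_eq_eval_ascPochhammer (x : ℂ) (k : ℕ) : poch x k = (ascPochhammer ℂ k).eval x := by
  induction k with
  | zero => simp [poch]
  | succ k ih => rw [poch, ih, ascPochhammer_succ_eval]

lemma poch_ne_zero_s5 {x : ℂ} (hx : ∀ m : ℕ, x + m ≠ 0) (k : ℕ) : poch x k ≠ 0 := by
  induction k with
  | zero => exact one_ne_zero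
  | succ k ih => exact mul_ne_zero ih (hx k)

lemma poch_succ_left (x : ℂ) (k : ℕ) : poch x (k + 1) = x * poch (x + 1) k := by
  simp [poch_eq_eval_ascPochhammer, ascPochhammer_succ_left]

lemma poch_add (x : ℂ) (m k : ℕ) : poch x (m + k) = poch x m * poch (x + m) k := by
  simp [poch_eq_eval_ascPochhammer, ← ascPochhammer_mul]

lemma poch_two (k : ℕ) : poch 2 k = (k + 1)! := by
  rw [poch_eq_eval_ascPochhammer, show (2 : ℂ) = (2 : ℕ) by norm_num,
    ascPochhammer_nat_eq_natCast_ascFactorial, add_comm k, ← factorial_mul_ascFactorial 1 k]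
  simp

lemma poch_neg_natCast_s5 (n k : ℕ) : poch (-n) k = (-1) ^ k * k ! * n.choose k := by
  rw [poch_eq_eval_ascPochhammer, ascPochhammer_eval_neg_eq_descPochhammer,
    descPochhammer_eval_eq_descFactorial, descFactorial_eq_factorial_mul_choose]
  push_cast
  ring

lemma Nat.cast_choose_succ_right_eq {R : Type*} [Ring R] (n k : ℕ) :
    (n.choose (k + 1) : R) * (k + 1) = n.choose k * (n - k) := by
  rcases le_or_gt k n with hk | hk
  · have h := congrArg (Nat.cast : ℕ → R) (choose_succ_right_eq n k)
    push_cast [Nat.cast_sub hk] at h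
    exact h
  · simp [choose_eq_zero_of_lt hk, choose_eq_zero_of_lt (lt_succ_of_lt hk)]

lemma Nat.cast_choose_mul_succ_eq {R : Type*} [Ring R] (n k : ℕ) :
    (n.choose k : R) * (n + 1) = (n + 1).choose k * (n + 1 - k) := by
  rcases le_or_gt k (n + 1) with hk | hk
  · have h := congrArg (Nat.cast : ℕ → R) (choose_mul_succ_eq n k)
    push_cast [Nat.cast_sub hk] at h
    exact h
  · simp [choose_eq_zero_of_lt hk, choose_eq_zero_of_lt (lt_of_succ_lt hk)]

section WZ

variable (a : ℂ)

noncomputable def wzBase (n k : ℕ) : ℂ :=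
  poch a k * poch (a - 1) k / (k ! * poch (a + 1) (n + k))

noncomputable def wzF (n k : ℕ) : ℂ :=
  n.choose k * (a + 2 * k) / (k + 1) * wzBase a n k

noncomputable def wzG (n k : ℕ) : ℂ :=
  -(k * (n + 1).choose k) / (n + 1) * wzBase a n k

lemma wzBase_succ_left (n k : ℕ) : wzBase a (n + 1) k = wzBase a n k / (a + n + k + 1) := by
  rw [wzBase, wzBase, show n + 1 + k = n + k + 1 by omega, poch]
  push_cast
  simp only [div_eq_mul_inv, mul_inv]
  ring

lemma wzBase_succ_right (n k : ℕ) :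
    wzBase a n (k + 1) = wzBase a n k * ((a + k) * (a - 1 + k)) / ((k + 1) * (a + n + k + 1)) := by
  rw [wzBase, wzBase, ← add_assoc, poch, poch, poch, factorial_succ]
  push_cast
  simp only [div_eq_mul_inv, mul_inv]
  ring

lemma add_two_mul_wzF_succ_sub_wzF (n k : ℕ) (hD : a + n + k + 1 ≠ 0) :
    (n + 2) * wzF a (n + 1) k - wzF a n k = wzG a n (k + 1) - wzG a n k := by
  have hn : (n : ℂ) + 1 ≠ 0 := Nat.cast_add_one_ne_zero n
  have hk : (k : ℂ) + 1 ≠ 0 := Nat.cast_add_one_ne_zero k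
  have h₁ := Nat.cast_choose_mul_succ_eq (R := ℂ) n k
  have h₂ := Nat.cast_choose_succ_right_eq (R := ℂ) (n + 1) k
  rw [wzF, wzF, wzG, wzG, wzBase_succ_left, wzBase_succ_right]
  push_cast at h₂ ⊢
  field_simp
  linear_combination
    wzBase a n k * (-(a + 2 * k) * (a + n + k + 1) * h₁ + (a + k) * (a + k - 1) * h₂)

lemma wzF_of_lt {n k : ℕ} (h : n < k) : wzF a n k = 0 := by
  simp [wzF, choose_eq_zero_of_lt h]

variable {a}

lemma add_two_mul_sum_wzF_succ (ha : ∀ m : ℕ, a + 1 + m ≠ 0) (n : ℕ) :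
    (n + 2) * ∑ k ∈ range (n + 2), wzF a (n + 1) k = ∑ k ∈ range (n + 1), wzF a n k := by
  have hD (k : ℕ) : a + n + k + 1 ≠ 0 := by
    convert ha (n + k) using 1
    push_cast
    ring
  have hG₀ : wzG a n 0 = 0 := by simp [wzG]
  have hG : wzG a n (n + 2) = 0 := by simp [wzG]
  have htel : ∑ k ∈ range (n + 2), ((n + 2) * wzF a (n + 1) k - wzF a n k) = 0 := by
    rw [sum_congr rfl fun k _ => add_two_mul_wzF_succ_sub_wzF a n k (hD k), sum_range_sub, hG,
      hG₀, sub_zero]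
  rwa [sum_sub_distrib, ← mul_sum, sub_eq_zero, sum_range_succ (wzF a n) (n + 1),
    wzF_of_lt a (lt_add_one n), add_zero] at htel

lemma sum_wzF (ha : ∀ m : ℕ, a + 1 + m ≠ 0) (n : ℕ) :
    ∑ k ∈ range (n + 1), wzF a n k = a / (n + 1)! := by
  induction n with
  | zero => simp [wzF, wzBase, poch]
  | succ n ih =>
    have h := add_two_mul_sum_wzF_succ ha n
    rw [ih, eq_div_iff (by exact_mod_cast (n + 1).factorial_ne_zero)] at h
    rw [eq_div_iff (by exact_mod_cast (n + 2).factorial_ne_zero), factorial_succ (n + 1)]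
    push_cast
    linear_combination h

end WZ

lemma summand_eq_mul_wzF {a : ℂ} (ha₀ : a ≠ 0) (hhalf : ∀ m : ℕ, a / 2 + m ≠ 0)
    (hpos : ∀ m : ℕ, a + 1 + m ≠ 0) (n k : ℕ) :
    (poch a k * poch (a - 1) k * poch (-(n : ℂ)) k * poch (1 + a/2) k) /
        (poch 2 k * poch (a/2) k * poch ((n : ℂ) + a + 1) k) * (-1) ^ k / (Nat.factorial k : ℂ)
      = poch (a + 1) n / a * wzF a n k := by
  have hsplit : poch (a + 1) (n + k) = poch (a + 1) n * poch (n + a + 1) k := by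
    rw [poch_add]
    congr 2
    ring
  obtain ⟨hPn, hPnk⟩ := mul_ne_zero_iff.mp (hsplit ▸ poch_ne_zero_s5 hpos (n + k))
  have hPhalf := poch_ne_zero_s5 hhalf k
  have hshift : poch (1 + a / 2) k = poch (a / 2) k * (a + 2 * k) / a := by
    have h := poch_succ_left (a / 2) k
    rw [poch, add_comm (a / 2) 1] at h
    rw [eq_div_iff ha₀]
    linear_combination -2 * h
  have hsign : ((-1 : ℂ) ^ k) ^ 2 = 1 := by rw [pow_right_comm, neg_one_sq, one_pow]
  have hk : (k ! : ℂ) ≠ 0 := by exact_mod_cast k.factorial_ne_zero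
  rw [wzF, wzBase, poch_neg_natCast_s5, poch_two, hsplit, hshift, factorial_succ]
  field_simp
  rw [hsign]
  push_cast
  ring

theorem stmt5_general (n : ℕ) (a : ℂ) (ha : ∀ m : ℕ, a ≠ -(m : ℂ)) :
    ∑ k ∈ Finset.range (n+1),
      (poch a k * poch (a - 1) k * poch (-(n : ℂ)) k * poch (1 + a/2) k) /
        (poch 2 k * poch (a/2) k * poch ((n : ℂ) + a + 1) k) * (-1) ^ k / (Nat.factorial k : ℂ)
    = poch (a + 1) n / (Nat.factorial (n+1) : ℂ) := by
  have ha₀ : a ≠ 0 := by simpa using ha 0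
  have hhalf (m : ℕ) : a / 2 + m ≠ 0 := fun h => ha (2 * m) (by push_cast; linear_combination 2 * h)
  have hpos (m : ℕ) : a + 1 + m ≠ 0 := fun h => ha (m + 1) (by push_cast; linear_combination h)
  rw [sum_congr rfl fun k _ => summand_eq_mul_wzF ha₀ hhalf hpos n k, ← mul_sum, sum_wzF hpos n]
  field_simp

theorem stmt5 (n : ℕ) (a : ℂ) (ha : ∀ m : ℕ, a ≠ -(m : ℂ))
    (han : ∀ m : ℕ, a + n + 1 ≠ -(m : ℂ)) :
    ∑ k ∈ Finset.range (n+1),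
      (poch a k * poch (a - 1) k * poch (-(n : ℂ)) k * poch (1 + a/2) k) /
        (poch 2 k * poch (a/2) k * poch ((n : ℂ) + a + 1) k) * (-1) ^ k / (Nat.factorial k : ℂ)
    = poch (a + 1) n / (Nat.factorial (n+1) : ℂ) :=
  stmt5_general n a ha
end
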